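/- Let J ≥ 1, θ0 ∈ ℝ^d, let μ be a measure on (ℝ^d)^J, and let h0 : (ℝ^d)^J → ℝ be μ-integrable. Suppose h0 satisfies the weak MISC condition at x with respect to θ0 for μ-almost every x. Then for every θ ∈ ℝ^d, ∫ gᴶ(θ,h0)(x) dμ(x) ≤ ∫ gᴶ(θ0,h0)(x) dμ(x) = ∫ |h0(x)| dμ(x); in particular θ0 maximizes the population MISC criterion Q_J(θ) := ∫ gᴶ(θ,h0) dμ. -/
import Mathlib


open MeasureTheory
open scoped RealInnerProductSpace

/-- The "positive part" multi-index ReLU-based maximum score function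
`gᴶ₊(θ,h)(x) = max(h(x) − min_j max(−⟪x_j,θ⟫,0), 0)`. -/
noncomputable def gJplus {d J : ℕ} (θ : EuclideanSpace ℝ (Fin d))
    (h : (Fin J → EuclideanSpace ℝ (Fin d)) → ℝ)
    (x : Fin J → EuclideanSpace ℝ (Fin d)) : ℝ :=
  max (h x - ⨅ j : Fin J, max (-⟪x j, θ⟫) 0) 0

/-- The "negative part" multi-index ReLU-based maximum score function
`gᴶ₋(θ,h)(x) = max(−h(x) − min_j max(⟪x_j,θ⟫,0), 0)`. -/
noncomputable def gJminus {d J : ℕ} (θ : EuclideanSpace ℝ (Fin d))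
    (h : (Fin J → EuclideanSpace ℝ (Fin d)) → ℝ)
    (x : Fin J → EuclideanSpace ℝ (Fin d)) : ℝ :=
  max (-h x - ⨅ j : Fin J, max ⟪x j, θ⟫ 0) 0

/-- The multi-index ReLU-based maximum score function `gᴶ = gᴶ₊ + gᴶ₋`. -/
noncomputable def gJ {d J : ℕ} (θ : EuclideanSpace ℝ (Fin d))
    (h : (Fin J → EuclideanSpace ℝ (Fin d)) → ℝ)
    (x : Fin J → EuclideanSpace ℝ (Fin d)) : ℝ :=
  gJplus θ h x + gJminus θ h x

/-- `h0` satisfies the weak multi-index single-crossing (MISC) condition at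
`x = (x_1,…,x_J)` with respect to `θ0`. -/
def WeakMISC {d J : ℕ} (θ0 : EuclideanSpace ℝ (Fin d))
    (h0 : (Fin J → EuclideanSpace ℝ (Fin d)) → ℝ)
    (x : Fin J → EuclideanSpace ℝ (Fin d)) : Prop :=
  ((∀ j, 0 < ⟪x j, θ0⟫) → 0 ≤ h0 x) ∧ ((∀ j, ⟪x j, θ0⟫ < 0) → h0 x ≤ 0)

/-- `θ0` maximizes the population MISC criterion
`Q_J(θ) = ∫ gᴶ(θ,h0) dμ`, whose maximal value is `∫ |h0| dμ`. -/
theorem misc_population_max {d J : ℕ} (hJ : 1 ≤ J)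
    (θ0 : EuclideanSpace ℝ (Fin d))
    (μ : Measure (Fin J → EuclideanSpace ℝ (Fin d)))
    (h0 : (Fin J → EuclideanSpace ℝ (Fin d)) → ℝ)
    (hint : Integrable h0 μ) (hmisc : ∀ᵐ x ∂μ, WeakMISC θ0 h0 x) :
    ∀ θ : EuclideanSpace ℝ (Fin d),
      (∫ x, gJ θ h0 x ∂μ) ≤ (∫ x, gJ θ0 h0 x ∂μ) ∧
      (∫ x, gJ θ0 h0 x ∂μ) = ∫ x, |h0 x| ∂μ := by
  intro θ
  haveI : Nonempty (Fin J) := ⟨⟨0, hJ⟩⟩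
  -- nonnegativity of the infima
  have hcpos : ∀ (η : EuclideanSpace ℝ (Fin d)) (x : Fin J → EuclideanSpace ℝ (Fin d)),
      (0 : ℝ) ≤ ⨅ j : Fin J, max (-⟪x j, η⟫) 0 := fun η x =>
    le_ciInf fun j => le_max_right _ _
  have hcneg : ∀ (η : EuclideanSpace ℝ (Fin d)) (x : Fin J → EuclideanSpace ℝ (Fin d)),
      (0 : ℝ) ≤ ⨅ j : Fin J, max ⟪x j, η⟫ 0 := fun η x =>
    le_ciInf fun j => le_max_right _ _
  -- pointwise bound gJ ≤ |h0|
  have hle : ∀ (η : EuclideanSpace ℝ (Fin d)) x, gJ η h0 x ≤ |h0 x| := by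
    intro η x
    have h1 : gJplus η h0 x ≤ max (h0 x) 0 := by
      apply max_le_max _ le_rfl
      linarith [hcpos η x]
    have h2 : gJminus η h0 x ≤ max (-h0 x) 0 := by
      apply max_le_max _ le_rfl
      linarith [hcneg η x]
    have : max (h0 x) 0 + max (-h0 x) 0 = |h0 x| := by
      rcases le_total (h0 x) 0 with h | h
      · rw [max_eq_right h, max_eq_left (by linarith), abs_of_nonpos h]; ring
      · rw [max_eq_left h, max_eq_right (by linarith), abs_of_nonneg h]; ring
    calc gJ η h0 x ≤ max (h0 x) 0 + max (-h0 x) 0 := add_le_add h1 h2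
      _ = |h0 x| := this
  have hnn : ∀ (η : EuclideanSpace ℝ (Fin d)) x, 0 ≤ gJ η h0 x := fun η x =>
    add_nonneg (le_max_right _ _) (le_max_right _ _)
  -- measurability
  have hmeas : ∀ (η : EuclideanSpace ℝ (Fin d)), AEStronglyMeasurable (gJ η h0) μ := by
    intro η
    have hm1 : Measurable fun x : Fin J → EuclideanSpace ℝ (Fin d) =>
        ⨅ j : Fin J, max (-⟪x j, η⟫) 0 := by
      apply Measurable.iInf
      intro j
      exact ((measurable_pi_apply j).inner measurable_const).neg.max measurable_const
    have hm2 : Measurable fun x : Fin J → EuclideanSpace ℝ (Fin d) =>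
        ⨅ j : Fin J, max ⟪x j, η⟫ 0 := by
      apply Measurable.iInf
      intro j
      exact ((measurable_pi_apply j).inner measurable_const).max measurable_const
    have hh := hint.aestronglyMeasurable
    unfold gJ gJplus gJminus
    exact ((hh.sub hm1.aestronglyMeasurable).sup aestronglyMeasurable_const).add
      ((hh.neg.sub hm2.aestronglyMeasurable).sup aestronglyMeasurable_const)
  -- integrability
  have habs : Integrable (fun x => |h0 x|) μ := hint.abs
  have hInt : ∀ (η : EuclideanSpace ℝ (Fin d)), Integrable (gJ η h0) μ := by
    intro η
    refine habs.mono' (hmeas η) (ae_of_all _ fun x => ?_)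
    rw [Real.norm_eq_abs, abs_of_nonneg (hnn η x)]
    exact hle η x
  -- a.e. equality at θ0
  have heq : (fun x => gJ θ0 h0 x) =ᵐ[μ] fun x => |h0 x| := by
    filter_upwards [hmisc] with x hx
    set cp := ⨅ j : Fin J, max (-⟪x j, θ0⟫) 0 with hcp
    set cn := ⨅ j : Fin J, max ⟪x j, θ0⟫ 0 with hcn
    have hcp0 : 0 ≤ cp := hcpos θ0 x
    have hcn0 : 0 ≤ cn := hcneg θ0 x
    have hbp : BddBelow (Set.range fun j : Fin J => max (-⟪x j, θ0⟫) 0) :=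
      ⟨0, by rintro y ⟨j, rfl⟩; exact le_max_right _ _⟩
    have hbn : BddBelow (Set.range fun j : Fin J => max ⟪x j, θ0⟫ 0) :=
      ⟨0, by rintro y ⟨j, rfl⟩; exact le_max_right _ _⟩
    rcases lt_trichotomy (h0 x) 0 with hneg | hzero | hpos
    · -- h0 x < 0 : some ⟪x j, θ0⟫ ≤ 0, so cn = 0
      have hj : ∃ j, ⟪x j, θ0⟫ ≤ 0 := by
        by_contra hcon
        push_neg at hcon
        exact absurd (hx.1 hcon) (not_le.mpr hneg)
      obtain ⟨j, hj⟩ := hj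
      have : cn ≤ 0 := by
        calc cn ≤ max ⟪x j, θ0⟫ 0 := ciInf_le hbn j
          _ = 0 := max_eq_right hj
      have hcn' : cn = 0 := le_antisymm this hcn0
      simp only [gJ, gJplus, gJminus, ← hcp, ← hcn, hcn']
      rw [max_eq_right (by linarith), max_eq_left (by linarith), abs_of_nonpos hneg.le]
      ring
    · simp only [gJ, gJplus, gJminus, ← hcp, ← hcn, hzero]
      rw [max_eq_right (by linarith), max_eq_right (by linarith), abs_zero]
      ring
    · -- h0 x > 0 : some ⟪x j, θ0⟫ ≥ 0, so cp = 0
      have hj : ∃ j, 0 ≤ ⟪x j, θ0⟫ := by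
        by_contra hcon
        push_neg at hcon
        exact absurd (hx.2 hcon) (not_le.mpr hpos)
      obtain ⟨j, hj⟩ := hj
      have : cp ≤ 0 := by
        calc cp ≤ max (-⟪x j, θ0⟫) 0 := ciInf_le hbp j
          _ = 0 := max_eq_right (by linarith)
      have hcp' : cp = 0 := le_antisymm this hcp0
      simp only [gJ, gJplus, gJminus, ← hcp, ← hcn, hcp']
      rw [max_eq_left (by linarith), max_eq_right (by linarith), abs_of_nonneg hpos.le]
      ring
  have h2 : (∫ x, gJ θ0 h0 x ∂μ) = ∫ x, |h0 x| ∂μ := integral_congr_ae heq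
  refine ⟨?_, h2⟩
  rw [h2]
  exact integral_mono_ae (hInt θ) habs (ae_of_all _ (hle θ))
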